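/- arXiv:2203.03353 — 4 statements merged into one kernel-verified Lean document; each statement's English description precedes it below -/
import Mathlib

section
/- Let n ≥ 2 and m ≥ 1, and let F ∈ ℝ^{n×m} and Q ∈ ℝ^{m×n} be row-stochastic matrices all of whose entries lie in the open interval (0,1). Suppose F has a nontrivial kernel, i.e., there exists x ≠ 0 in ℝ^m with Fx = 0. Then there exists a row-stochastic matrix Q̃ ∈ ℝ^{m×n} with Q̃ ≠ Q and F·Q = F·Q̃. In particular, the Markov chains with transition matrices FQ and FQ̃ coincide and therefore have the same stationary distributions. -/
open Matrix BigOperators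

/-! Perturb `Q` by a small multiple of the rank-one matrix `x wᵀ`, where `F x = 0` and `w ≠ 0`
has coordinate sum zero: `F x = 0` makes the perturbation invisible in `F * Q`, `∑ w = 0` keeps
the row sums equal to one, and the strict positivity of `Q` leaves room for a small step. -/

open Filter in
theorem Matrix.exists_pos_forall_nonneg_add_smul {m n : Type*} [Finite m] [Finite n]
    {Q : Matrix m n ℝ} (hQ : ∀ i j, 0 < Q i j) (D : Matrix m n ℝ) :
    ∃ ε : ℝ, 0 < ε ∧ ∀ i j, 0 ≤ (Q + ε • D) i j := by
  have hnear : ∀ᶠ ε in nhds (0 : ℝ), ∀ i j, 0 < Q i j + ε * D i j :=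
    eventually_all.2 fun i => eventually_all.2 fun j =>
      ((continuous_const.add (continuous_id.mul continuous_const)).tendsto' 0 (Q i j)
        (by simp)).eventually_const_lt (hQ i j)
  obtain ⟨ε, hpos, hε⟩ :=
    (eventually_mem_nhdsWithin (s := Set.Ioi (0 : ℝ)).and
      (hnear.filter_mono nhdsWithin_le_nhds)).exists
  exact ⟨ε, hpos, fun i j => (hε i j).le⟩

theorem Matrix.vecMulVec_ne_zero_of_ne_zero {α m n : Type*} [MulZeroClass α] [NoZeroDivisors α]
    {a : m → α} {b : n → α} (ha : a ≠ 0) (hb : b ≠ 0) : vecMulVec a b ≠ 0 := by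
  obtain ⟨i, hi⟩ := Function.ne_iff.mp ha
  obtain ⟨j, hj⟩ := Function.ne_iff.mp hb
  exact fun h => mul_ne_zero hi hj (congrFun₂ h i j)

theorem exists_ne_zero_sum_eq_zero {R n : Type*} [Ring R] [Nontrivial R] [Fintype n]
    [DecidableEq n] [Nontrivial n] : ∃ w : n → R, w ≠ 0 ∧ ∑ j, w j = 0 := by
  obtain ⟨a, b, hab⟩ := exists_pair_ne n
  refine ⟨Pi.single a 1 - Pi.single b 1, fun h => ?_, by simp⟩
  simpa [hab] using congrFun h a

theorem gibbs_chain_not_injective_general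
    (n m : ℕ) (hn : 2 ≤ n)
    (F : Matrix (Fin n) (Fin m) ℝ) (Q : Matrix (Fin m) (Fin n) ℝ)
    (hQmem : ∀ i j, Q i j ∈ Set.Ioo (0 : ℝ) 1) (hQrow : ∀ i, ∑ j, Q i j = 1)
    (hker : ∃ x : Fin m → ℝ, x ≠ 0 ∧ F *ᵥ x = 0) :
    ∃ Qt : Matrix (Fin m) (Fin n) ℝ,
      (∀ i j, 0 ≤ Qt i j) ∧ (∀ i, ∑ j, Qt i j = 1) ∧ Qt ≠ Q ∧ F * Q = F * Qt := by
  obtain ⟨x, hx, hFx⟩ := hker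
  have := Fin.nontrivial_iff_two_le.2 hn
  obtain ⟨w, hw, hwsum⟩ := exists_ne_zero_sum_eq_zero (R := ℝ) (n := Fin n)
  obtain ⟨ε, hε, hnonneg⟩ :=
    Matrix.exists_pos_forall_nonneg_add_smul (fun i j => (hQmem i j).1) (vecMulVec x w)
  refine ⟨Q + ε • vecMulVec x w, hnonneg, fun i => ?_, ?_, ?_⟩
  · simp [Finset.sum_add_distrib, hQrow, vecMulVec_apply, ← Finset.mul_sum, hwsum]
  · simpa using smul_ne_zero hε.ne' (vecMulVec_ne_zero_of_ne_zero hx hw)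
  · rw [Matrix.mul_add, Matrix.mul_smul, mul_vecMulVec, hFx, zero_vecMulVec, smul_zero, add_zero]

/-- Different approximations can define the same Gibbs chain: if the
entries of the row-stochastic matrices `F` and `Q` lie in `(0,1)` and `F` has a
nontrivial kernel, then there is a row-stochastic `Qt ≠ Q` with `F * Q = F * Qt`. -/
theorem gibbs_chain_not_injective
    (n m : ℕ) (hn : 2 ≤ n) (hm : 1 ≤ m)
    (F : Matrix (Fin n) (Fin m) ℝ) (Q : Matrix (Fin m) (Fin n) ℝ)
    (hFmem : ∀ i j, F i j ∈ Set.Ioo (0 : ℝ) 1) (hFrow : ∀ i, ∑ j, F i j = 1)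
    (hQmem : ∀ i j, Q i j ∈ Set.Ioo (0 : ℝ) 1) (hQrow : ∀ i, ∑ j, Q i j = 1)
    (hker : ∃ x : Fin m → ℝ, x ≠ 0 ∧ F *ᵥ x = 0) :
    ∃ Qt : Matrix (Fin m) (Fin n) ℝ,
      (∀ i j, 0 ≤ Qt i j) ∧ (∀ i, ∑ j, Qt i j = 1) ∧ Qt ≠ Q ∧ F * Q = F * Qt :=
  gibbs_chain_not_injective_general n m hn F Q hQmem hQrow hker
end

section
/- Let M ∈ ℝ^{d×d} be symmetric positive definite and let n > 0 be a real number. Let D ∈ ℝ^{d×d} be the diagonal matrix whose diagonal entries are the diagonal entries of (M + nI)⁻¹. Then D is positive definite, and the matrix D⁻¹ − nI is positive definite; moreover its smallest eigenvalue satisfies λ_min(D⁻¹ − nI) ≥ λ_min(M) > 0. -/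
/-!
Write `λ` for the least eigenvalue of `M` and `B = M + nI`, so that `(λ + n) I ≤ B` in the Loewner
order. Testing this against `y = B⁻¹ eᵢ` gives `yᵢ = yᵀBy ≥ (λ + n)‖y‖² ≥ (λ + n) yᵢ²`, hence
`(B⁻¹)ᵢᵢ ≤ (λ + n)⁻¹`. Every diagonal entry `(B⁻¹)ᵢᵢ⁻¹ - n` of the diagonal matrix `D⁻¹ - nI` is
therefore at least `λ`, and these entries are its eigenvalues.
-/

open Matrix
open scoped MatrixOrder

namespace Matrix

variable {ι : Type*} [Fintype ι] [DecidableEq ι]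

theorem IsHermitian.algebraMap_le_iff_le_eigenvalues {A : Matrix ι ι ℝ} (hA : A.IsHermitian)
    {r : ℝ} : algebraMap ℝ _ r ≤ A ↔ ∀ i, r ≤ hA.eigenvalues i := by
  rw [algebraMap_le_iff_le_spectrum hA.isSelfAdjoint, hA.spectrum_real_eq_range_eigenvalues,
    Set.forall_mem_range]

theorem algebraMap_le_diagonal_iff {f : ι → ℝ} {r : ℝ} :
    algebraMap ℝ _ r ≤ diagonal f ↔ ∀ i, r ≤ f i := by
  simp only [le_iff, algebraMap_eq_diagonal, diagonal_sub, posSemidef_diagonal_iff,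
    Pi.algebraMap_apply, Algebra.algebraMap_self, RingHom.id_apply, sub_nonneg]

theorem mul_dotProduct_self_le_of_algebraMap_le {A : Matrix ι ι ℝ} {r : ℝ}
    (h : algebraMap ℝ _ r ≤ A) (x : ι → ℝ) : r * (x ⬝ᵥ x) ≤ x ⬝ᵥ (A *ᵥ x) := by
  have := (le_iff.mp h).dotProduct_mulVec_nonneg x
  rwa [star_trivial, sub_mulVec, dotProduct_sub, Algebra.algebraMap_eq_smul_one, smul_mulVec,
    one_mulVec, dotProduct_smul, smul_eq_mul, sub_nonneg] at this

theorem posDef_of_algebraMap_le {B : Matrix ι ι ℝ} {r : ℝ} (hr : 0 < r)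
    (h : algebraMap ℝ _ r ≤ B) : B.PosDef := by
  simpa [Algebra.algebraMap_eq_smul_one] using
    PosDef.posSemidef_add (le_iff.mp h) (PosDef.one.smul hr)

theorem inv_apply_self_le_inv_of_algebraMap_le {B : Matrix ι ι ℝ} {r : ℝ} (hr : 0 < r)
    (h : algebraMap ℝ _ r ≤ B) (i : ι) : B⁻¹ i i ≤ r⁻¹ := by
  have hB := posDef_of_algebraMap_le hr h
  set y := B⁻¹ *ᵥ Pi.single i 1
  have hyi : y i = B⁻¹ i i := by simp [y, mulVec_single]
  have hBy : B *ᵥ y = Pi.single i 1 := by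
    rw [mulVec_mulVec, mul_nonsing_inv _ ((isUnit_iff_isUnit_det B).mp hB.isUnit), one_mulVec]
  have hyy : y i * y i ≤ y ⬝ᵥ y :=
    Finset.single_le_sum (fun j _ => mul_self_nonneg (y j)) (Finset.mem_univ i)
  have key : y i * r * y i ≤ 1 * y i := calc
    y i * r * y i = r * (y i * y i) := by ring
    _ ≤ r * (y ⬝ᵥ y) := by gcongr
    _ ≤ y ⬝ᵥ (B *ᵥ y) := mul_dotProduct_self_le_of_algebraMap_le h y
    _ = 1 * y i := by rw [hBy, dotProduct_single, mul_one, one_mul]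
  rw [← hyi, ← one_div, le_div_iff₀ hr]
  exact le_of_mul_le_mul_right key (hyi ▸ hB.inv.diag_pos)

theorem inv_diagonal_of_ne_zero {K : Type*} [Field K] {f : ι → K} (hf : ∀ i, f i ≠ 0) :
    (diagonal f)⁻¹ = diagonal f⁻¹ :=
  inv_eq_left_inv <| by simp [hf]

end Matrix

/-- For `M` symmetric positive definite and `n > 0`, the diagonal matrix
`D` of the diagonal entries of `(M + nI)⁻¹` is positive definite, `D⁻¹ − nI` is positive
definite, and `λ_min(D⁻¹ − nI) ≥ λ_min(M) > 0`. -/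
theorem diag_inverse_precision_bound
    {d : ℕ} (hd : 1 ≤ d) (M : Matrix (Fin d) (Fin d) ℝ) (hM : M.PosDef)
    (n : ℝ) (hn : 0 < n)
    (D : Matrix (Fin d) (Fin d) ℝ)
    (hD : D = Matrix.diagonal (fun i => (M + n • (1 : Matrix (Fin d) (Fin d) ℝ))⁻¹ i i)) :
    D.PosDef ∧
    ∃ hpd : (D⁻¹ - n • (1 : Matrix (Fin d) (Fin d) ℝ)).PosDef,
      (⨅ i, hM.1.eigenvalues i) ≤ (⨅ i, hpd.1.eigenvalues i) ∧
      0 < ⨅ i, hM.1.eigenvalues i := by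
  have : Nonempty (Fin d) := ⟨⟨0, hd⟩⟩
  set c := ⨅ i, hM.1.eigenvalues i
  have hc_pos : 0 < c := by
    obtain ⟨i, hi⟩ := exists_eq_ciInf_of_finite (f := hM.1.eigenvalues)
    exact (hM.eigenvalues_pos i).trans_eq hi
  have hcM : algebraMap ℝ _ c ≤ M := hM.1.algebraMap_le_iff_le_eigenvalues.mpr
    fun i => ciInf_le (Set.finite_range _).bddBelow i
  set B := M + n • (1 : Matrix (Fin d) (Fin d) ℝ)
  have hcB : algebraMap ℝ _ (c + n) ≤ B := by
    rw [map_add, Algebra.algebraMap_eq_smul_one n]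
    exact add_le_add_left hcM _
  set a := fun i => B⁻¹ i i
  have ha_pos : ∀ i, 0 < a i := fun i =>
    (posDef_of_algebraMap_le (by positivity) hcB).inv.diag_pos
  have hc_le : ∀ i, c ≤ (a i)⁻¹ - n := fun i => by
    rw [le_sub_iff_add_le, ← le_inv_comm₀ (ha_pos i) (by positivity)]
    exact inv_apply_self_le_inv_of_algebraMap_le (by positivity) hcB i
  have hsub : D⁻¹ - n • 1 = diagonal fun i => (a i)⁻¹ - n := by
    rw [hD, inv_diagonal_of_ne_zero fun i => (ha_pos i).ne', smul_one_eq_diagonal, diagonal_sub]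
    rfl
  have hpd : (D⁻¹ - n • 1).PosDef := hsub ▸ PosDef.diagonal fun i => hc_pos.trans_le (hc_le i)
  refine ⟨hD ▸ PosDef.diagonal ha_pos, hpd,
    le_ciInf (hpd.1.algebraMap_le_iff_le_eigenvalues.mp ?_), hc_pos⟩
  rw [hsub]
  exact algebraMap_le_diagonal_iff.mpr hc_le
end

section
/- Let μ₀ ∈ ℝ^d, let Σ₀, Σ_l, Σ_q ∈ ℝ^{d×d} be symmetric positive definite, and let n ≥ 1. Set Σ_n := (Σ₀⁻¹ + nΣ_l⁻¹)⁻¹, a := Σ_nΣ₀⁻¹μ₀, A := nΣ_nΣ_l⁻¹, and B := Σ_q + nΣ_nΣ_l⁻¹Σ_n. Suppose Σ_G ∈ ℝ^{d×d} is symmetric positive definite and satisfies the Lyapunov equation A Σ_G Aᵀ − Σ_G + B = 0. Then the Gaussian density N(·; μ₀, Σ_G) is a stationary density of the Gibbs chain with transition density r(θ'|θ) = N(θ'; a + Aθ, B): for all θ' ∈ ℝ^d, ∫_{ℝ^d} N(θ'; a + Aθ, B) · N(θ; μ₀, Σ_G) dθ = N(θ'; μ₀, Σ_G). In particular, the Gibbs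 prior of this Gaussian model has mean equal to the prior mean μ₀ and covariance Σ_G solving the Lyapunov equation. -/
/-!
Integrating `θ` out of the linear Gaussian model `y | θ ∼ N(b + Aθ, B)`, `θ ∼ N(m, S)` gives
`y ∼ N(b + Am, ASAᵀ + B)`: completing the square in `θ` factors the product of the two densities
into `N(y; b + Am, ASAᵀ + B)` times a Gaussian density in `θ` with precision `S⁻¹ + AᵀB⁻¹A`,
the Woodbury identity matching the exponents and the matrix determinant lemma the normalising
constants. For the Gibbs chain, `μ₀` is a fixed point of `θ ↦ a + Aθ` because `Σ_n` inverts
`Σ₀⁻¹ + nΣ_l⁻¹`, and the Lyapunov equation says precisely `AΣ_GAᵀ + B = Σ_G`.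
-/

open Matrix MeasureTheory

noncomputable def gaussDensity {d : ℕ} (μ : Fin d → ℝ) (S : Matrix (Fin d) (Fin d) ℝ)
    (x : Fin d → ℝ) : ℝ :=
  (2 * Real.pi) ^ (-(d : ℝ) / 2) * S.det ^ (-(1 : ℝ) / 2) *
    Real.exp (-(1 / 2) * ((x - μ) ⬝ᵥ (S⁻¹ *ᵥ (x - μ))))

namespace Matrix

variable {m n R : Type*} [Fintype m] [Fintype n] [CommRing R]

theorem sub_dotProduct_mulVec_sub {M : Matrix n n R} (hM : Mᵀ = M) (x y : n → R) :
    (x - y) ⬝ᵥ (M *ᵥ (x - y)) = x ⬝ᵥ (M *ᵥ x) - 2 * (x ⬝ᵥ (M *ᵥ y)) + y ⬝ᵥ (M *ᵥ y) := by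
  have hsymm : y ⬝ᵥ (M *ᵥ x) = x ⬝ᵥ (M *ᵥ y) := by
    rw [← dotProduct_transpose_mulVec, hM]
  rw [mulVec_sub, sub_dotProduct, dotProduct_sub, dotProduct_sub, hsymm]
  ring

variable [DecidableEq n]

/-- By Woodbury, the matrix of the first term on the right is `(P⁻¹ + A Q⁻¹ Aᵀ)⁻¹`. -/
theorem dotProduct_mulVec_complete_square {P : Matrix m m R} {Q : Matrix n n R}
    (hP : Pᵀ = P) (hQ : Qᵀ = Q) (A : Matrix m n R) (hC : IsUnit (Q + Aᵀ * P * A).det)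
    (u : n → R) (v : m → R) :
    (v - A *ᵥ u) ⬝ᵥ (P *ᵥ (v - A *ᵥ u)) + u ⬝ᵥ (Q *ᵥ u) =
      v ⬝ᵥ ((P - P * A * (Q + Aᵀ * P * A)⁻¹ * Aᵀ * P) *ᵥ v) +
        (u - (Q + Aᵀ * P * A)⁻¹ *ᵥ (Aᵀ *ᵥ (P *ᵥ v))) ⬝ᵥ
          ((Q + Aᵀ * P * A) *ᵥ (u - (Q + Aᵀ * P * A)⁻¹ *ᵥ (Aᵀ *ᵥ (P *ᵥ v)))) := by
  set C := Q + Aᵀ * P * A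
  set g := Aᵀ *ᵥ (P *ᵥ v)
  set w := C⁻¹ *ᵥ g
  have hCsymm : Cᵀ = C := by
    simp only [C, transpose_add, transpose_mul, transpose_transpose, hP, hQ, Matrix.mul_assoc]
  have hCw : C *ᵥ w = g := by rw [mulVec_mulVec, mul_nonsing_inv _ hC, one_mulVec]
  have hPA (x : n → R) : v ⬝ᵥ (P *ᵥ (A *ᵥ x)) = x ⬝ᵥ g := by
    rw [mulVec_mulVec, ← dotProduct_transpose_mulVec, transpose_mul, hP, ← mulVec_mulVec]
  have hAuAu : (A *ᵥ u) ⬝ᵥ (P *ᵥ (A *ᵥ u)) = u ⬝ᵥ ((Aᵀ * P * A) *ᵥ u) := by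
    rw [dotProduct_comm, ← dotProduct_transpose_mulVec, mulVec_mulVec, mulVec_mulVec]
  have hvWv : v ⬝ᵥ ((P * A * C⁻¹ * Aᵀ * P) *ᵥ v) = w ⬝ᵥ g := by
    rw [← hPA w]
    simp only [w, g, mulVec_mulVec, Matrix.mul_assoc]
  rw [sub_dotProduct_mulVec_sub hP, sub_dotProduct_mulVec_sub hCsymm, hCw, hPA, hAuAu,
    sub_mulVec, dotProduct_sub, hvWv, add_mulVec, dotProduct_add, dotProduct_comm w g]
  ring

theorem det_add_mul_mul [DecidableEq m] {B : Matrix m m R} {S : Matrix n n R} (hB : IsUnit B.det)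
    (hS : IsUnit S.det) (U : Matrix m n R) (V : Matrix n m R) :
    (B + U * S * V).det = B.det * S.det * (S⁻¹ + V * B⁻¹ * U).det := by
  have hSC : S * (S⁻¹ + V * B⁻¹ * U) = 1 + S * V * B⁻¹ * U := by
    rw [Matrix.mul_add, mul_nonsing_inv _ hS]
    simp only [Matrix.mul_assoc]
  rw [Matrix.mul_assoc U, det_add_mul _ _ hB, ← hSC, det_mul]
  ring

end Matrix

theorem integral_comp_mulVec {ι : Type*} [Fintype ι] [DecidableEq ι] {M : Matrix ι ι ℝ}
    (hM : M.det ≠ 0) (f : (ι → ℝ) → ℝ) :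
    ∫ x, f (M *ᵥ x) = |M.det|⁻¹ * ∫ y, f y := by
  let e := ((toLin' M).equivOfDetNeZero (by rwa [LinearMap.det_toLin'])).toContinuousLinearEquiv
  have he : MeasurableEmbedding (toLin' M) := e.toHomeomorph.measurableEmbedding
  simp_rw [← toLin'_apply M]
  rw [← he.integral_map, Real.map_matrix_volume_pi_eq_smul_volume_pi hM,
    integral_smul_measure, ENNReal.toReal_ofReal (abs_nonneg _), abs_inv, smul_eq_mul]

theorem integral_exp_neg_half_dotProduct_self {ι : Type*} [Fintype ι] :
    ∫ y : ι → ℝ, Real.exp (-(1 / 2) * (y ⬝ᵥ y)) = √(2 * Real.pi) ^ Fintype.card ι := by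
  have hline : ∫ t : ℝ, Real.exp (-(1 / 2) * t ^ 2) = √(2 * Real.pi) := by
    rw [integral_gaussian]; congr 1; field_simp
  simp_rw [dotProduct, Finset.mul_sum, Real.exp_sum, ← hline, ← sq]
  exact integral_fintype_prod_eq_pow (μ := volume) fun t : ℝ => Real.exp (-(1 / 2) * t ^ 2)

open scoped MatrixOrder in
theorem Matrix.PosDef.integral_exp_neg_half_dotProduct_mulVec {ι : Type*} [Fintype ι]
    [DecidableEq ι] {M : Matrix ι ι ℝ} (hM : M.PosDef) :
    ∫ x : ι → ℝ, Real.exp (-(1 / 2) * (x ⬝ᵥ (M *ᵥ x))) =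
      √(2 * Real.pi) ^ Fintype.card ι / √M.det := by
  set R := CFC.sqrt M
  have hRR : R * R = M := CFC.sqrt_mul_sqrt_self M hM.posSemidef.nonneg
  have hRsymm : Rᵀ = R := (CFC.sqrt_nonneg M).posSemidef.isHermitian.eq
  have hRdet : R.det = √M.det := by rw [hM.posSemidef.det_sqrt, RCLike.sqrt_real]
  have hRdet_ne : R.det ≠ 0 := hRdet ▸ (Real.sqrt_pos.2 hM.det_pos).ne'
  have hquad (x : ι → ℝ) : x ⬝ᵥ (M *ᵥ x) = (R *ᵥ x) ⬝ᵥ (R *ᵥ x) := by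
    rw [← hRR, ← mulVec_mulVec, dotProduct_mulVec, ← mulVec_transpose, hRsymm, dotProduct_comm]
  simp_rw [hquad]
  rw [integral_comp_mulVec hRdet_ne fun y => Real.exp (-(1 / 2) * (y ⬝ᵥ y)),
    integral_exp_neg_half_dotProduct_self, hRdet, abs_of_nonneg (Real.sqrt_nonneg _),
    inv_mul_eq_div]

theorem integral_gaussDensity {d : ℕ} (m : Fin d → ℝ) {S : Matrix (Fin d) (Fin d) ℝ}
    (hS : S.PosDef) : ∫ x, gaussDensity m S x = 1 := by
  have h2π : 0 < 2 * Real.pi := by positivity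
  have hdet := hS.det_pos
  unfold gaussDensity
  rw [integral_const_mul,
    integral_sub_right_eq_self (fun x => Real.exp (-(1 / 2) * (x ⬝ᵥ (S⁻¹ *ᵥ x)))),
    hS.inv.integral_exp_neg_half_dotProduct_mulVec, Fintype.card_fin, det_nonsing_inv,
    Ring.inverse_eq_inv', Real.sqrt_inv, div_inv_eq_mul, Real.sqrt_eq_rpow, Real.sqrt_eq_rpow,
    ← Real.rpow_natCast, ← Real.rpow_mul h2π.le]
  calc (2 * Real.pi) ^ (-(d : ℝ) / 2) * S.det ^ (-(1 : ℝ) / 2) *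
        ((2 * Real.pi) ^ (1 / 2 * (d : ℝ)) * S.det ^ (1 / 2 : ℝ))
      = (2 * Real.pi) ^ (-(d : ℝ) / 2 + 1 / 2 * d) * S.det ^ (-(1 : ℝ) / 2 + 1 / 2) := by
        rw [Real.rpow_add h2π, Real.rpow_add hdet]; ring
    _ = 1 := by ring_nf; simp

theorem Matrix.PosDef.inv_add_transpose_mul_inv_mul {m n : Type*} [Fintype m] [Fintype n]
    [DecidableEq m] [DecidableEq n] {B : Matrix m m ℝ} {S : Matrix n n ℝ} (hS : S.PosDef)
    (hB : B.PosDef) (A : Matrix m n ℝ) :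
    (S⁻¹ + Aᵀ * B⁻¹ * A).PosDef :=
  hS.inv.add_posSemidef <| by simpa using hB.inv.posSemidef.conjTranspose_mul_mul_same A

theorem gaussDensity_affine_mul_gaussDensity {k d : ℕ} {B : Matrix (Fin k) (Fin k) ℝ}
    {S : Matrix (Fin d) (Fin d) ℝ} (hB : B.PosDef) (hS : S.PosDef) (A : Matrix (Fin k) (Fin d) ℝ)
    (b : Fin k → ℝ) (m : Fin d → ℝ) (y : Fin k → ℝ) (θ : Fin d → ℝ) :
    gaussDensity (b + A *ᵥ θ) B y * gaussDensity m S θ =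
      gaussDensity (b + A *ᵥ m) (A * S * Aᵀ + B) y *
        gaussDensity (m + (S⁻¹ + Aᵀ * B⁻¹ * A)⁻¹ *ᵥ (Aᵀ *ᵥ (B⁻¹ *ᵥ (y - (b + A *ᵥ m)))))
          (S⁻¹ + Aᵀ * B⁻¹ * A)⁻¹ θ := by
  set C := S⁻¹ + Aᵀ * B⁻¹ * A
  have hC : C.PosDef := hS.inv_add_transpose_mul_inv_mul hB A
  have hT : A * S * Aᵀ + B = B + A * S * Aᵀ := add_comm _ _
  have hTinv : (A * S * Aᵀ + B)⁻¹ = B⁻¹ - B⁻¹ * A * C⁻¹ * Aᵀ * B⁻¹ := by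
    rw [hT, add_mul_mul_inv_eq_sub _ _ _ _ hB.isUnit hS.isUnit]
    exact hC.isUnit
  have hTdet : (A * S * Aᵀ + B).det = B.det * S.det * C.det := by
    rw [hT, det_add_mul_mul hB.det_pos.ne'.isUnit hS.det_pos.ne'.isUnit]
  have hconst : (A * S * Aᵀ + B).det ^ (-(1 : ℝ) / 2) * C⁻¹.det ^ (-(1 : ℝ) / 2) =
      B.det ^ (-(1 : ℝ) / 2) * S.det ^ (-(1 : ℝ) / 2) := by
    have := hB.det_pos; have := hS.det_pos; have := hC.det_pos
    rw [hTdet, det_nonsing_inv, Ring.inverse_eq_inv', Real.inv_rpow (by positivity),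
      Real.mul_rpow (by positivity) (by positivity), Real.mul_rpow (by positivity) (by positivity)]
    field_simp
  have hsquare := dotProduct_mulVec_complete_square (P := B⁻¹) (Q := S⁻¹)
    hB.inv.isHermitian.eq hS.inv.isHermitian.eq A hC.det_pos.ne'.isUnit (θ - m) (y - (b + A *ᵥ m))
  have hres : y - (b + A *ᵥ θ) = y - (b + A *ᵥ m) - A *ᵥ (θ - m) := by
    rw [mulVec_sub]; abel
  unfold gaussDensity
  rw [mul_mul_mul_comm, mul_mul_mul_comm _ (Real.exp _), ← Real.exp_add, ← Real.exp_add,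
    ← mul_add, ← mul_add, hres, sub_add_eq_sub_sub θ m, hsquare, hTinv,
    nonsing_inv_nonsing_inv _ hC.det_pos.ne'.isUnit]
  congr 1
  linear_combination (-((2 * Real.pi) ^ (-(k : ℝ) / 2) * (2 * Real.pi) ^ (-(d : ℝ) / 2))) * hconst

theorem integral_gaussDensity_affine_mul_gaussDensity {k d : ℕ} {B : Matrix (Fin k) (Fin k) ℝ}
    {S : Matrix (Fin d) (Fin d) ℝ} (hB : B.PosDef) (hS : S.PosDef) (A : Matrix (Fin k) (Fin d) ℝ)
    (b : Fin k → ℝ) (m : Fin d → ℝ) (y : Fin k → ℝ) :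
    ∫ θ, gaussDensity (b + A *ᵥ θ) B y * gaussDensity m S θ =
      gaussDensity (b + A *ᵥ m) (A * S * Aᵀ + B) y := by
  simp_rw [gaussDensity_affine_mul_gaussDensity hB hS]
  rw [integral_const_mul, integral_gaussDensity _ (hS.inv_add_transpose_mul_inv_mul hB A).inv,
    mul_one]

theorem gibbs_prior_gaussian_stationary_general
    {d : ℕ} (μ₀ : Fin d → ℝ) (S0 Sl Sq : Matrix (Fin d) (Fin d) ℝ)
    (hS0 : S0.PosDef) (hSl : Sl.PosDef) (hSq : Sq.PosDef)
    (n : ℕ)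
    (Sn : Matrix (Fin d) (Fin d) ℝ) (hSn : Sn = (S0⁻¹ + (n : ℝ) • Sl⁻¹)⁻¹)
    (a : Fin d → ℝ) (ha : a = Sn *ᵥ (S0⁻¹ *ᵥ μ₀))
    (A : Matrix (Fin d) (Fin d) ℝ) (hA : A = (n : ℝ) • (Sn * Sl⁻¹))
    (B : Matrix (Fin d) (Fin d) ℝ) (hB : B = Sq + (n : ℝ) • (Sn * Sl⁻¹ * Sn))
    (SG : Matrix (Fin d) (Fin d) ℝ) (hSG : SG.PosDef)
    (hLyap : A * SG * Aᵀ - SG + B = 0) :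
    ∀ θ' : Fin d → ℝ,
      ∫ θ : Fin d → ℝ, gaussDensity (a + A *ᵥ θ) B θ' * gaussDensity μ₀ SG θ =
        gaussDensity μ₀ SG θ' := by
  intro θ'
  have hprec : (S0⁻¹ + (n : ℝ) • Sl⁻¹).PosDef :=
    hS0.inv.add_posSemidef (hSl.inv.posSemidef.smul n.cast_nonneg)
  have hBpos : B.PosDef := by
    have hSn_symm : Snᴴ = Sn := (hSn ▸ hprec.inv : Sn.PosDef).isHermitian.eq
    rw [hB]
    refine hSq.add_posSemidef (PosSemidef.smul ?_ n.cast_nonneg)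
    simpa only [hSn_symm] using hSl.inv.posSemidef.mul_mul_conjTranspose_same Sn
  have hmean : a + A *ᵥ μ₀ = μ₀ := by
    have hSn_mul : Sn * (S0⁻¹ + (n : ℝ) • Sl⁻¹) = 1 := by
      rw [hSn]; exact nonsing_inv_mul _ hprec.det_pos.ne'.isUnit
    calc a + A *ᵥ μ₀ = (Sn * (S0⁻¹ + (n : ℝ) • Sl⁻¹)) *ᵥ μ₀ := by
          rw [ha, hA, mulVec_mulVec, ← add_mulVec, Matrix.mul_add, mul_smul_comm]
      _ = μ₀ := by rw [hSn_mul, one_mulVec]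
  have hcov : A * SG * Aᵀ + B = SG := by
    rw [← sub_eq_zero, ← hLyap]; abel
  rw [integral_gaussDensity_affine_mul_gaussDensity hBpos hSG, hmean, hcov]

/-- If `Σ_G` is symmetric positive definite and solves the Lyapunov
equation `AΣ_GAᵀ − Σ_G + B = 0`, then `N(·; μ₀, Σ_G)` is a stationary density of the
Gibbs chain with transition density `r(θ'|θ) = N(θ'; a + Aθ, B)`: the Gibbs prior of
the Gaussian model is `N(μ₀, Σ_G)`. -/
theorem gibbs_prior_gaussian_stationary
    {d : ℕ} (μ₀ : Fin d → ℝ) (S0 Sl Sq : Matrix (Fin d) (Fin d) ℝ)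
    (hS0 : S0.PosDef) (hSl : Sl.PosDef) (hSq : Sq.PosDef)
    (n : ℕ) (hn : 1 ≤ n)
    (Sn : Matrix (Fin d) (Fin d) ℝ) (hSn : Sn = (S0⁻¹ + (n : ℝ) • Sl⁻¹)⁻¹)
    (a : Fin d → ℝ) (ha : a = Sn *ᵥ (S0⁻¹ *ᵥ μ₀))
    (A : Matrix (Fin d) (Fin d) ℝ) (hA : A = (n : ℝ) • (Sn * Sl⁻¹))
    (B : Matrix (Fin d) (Fin d) ℝ) (hB : B = Sq + (n : ℝ) • (Sn * Sl⁻¹ * Sn))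
    (SG : Matrix (Fin d) (Fin d) ℝ) (hSG : SG.PosDef)
    (hLyap : A * SG * Aᵀ - SG + B = 0) :
    ∀ θ' : Fin d → ℝ,
      ∫ θ : Fin d → ℝ, gaussDensity (a + A *ᵥ θ) B θ' * gaussDensity μ₀ SG θ =
        gaussDensity μ₀ SG θ' :=
  gibbs_prior_gaussian_stationary_general μ₀ S0 Sl Sq hS0 hSl hSq n Sn hSn a ha A hA B hB SG hSG
    hLyap
end

section
/- Let Σ₀, Σ_l ∈ ℝ^{d×d} be symmetric positive definite and n ≥ 1. Then every eigenvalue of the matrix A := n(Σ₀⁻¹ + nΣ_l⁻¹)⁻¹Σ_l⁻¹ ∈ ℝ^{d×d} is real and lies in the open interval (0, 1). Consequently, for any B ∈ ℝ^{d×d} the Lyapunov equation A X Aᵀ − X + B = 0 has a unique solution X ∈ ℝ^{d×d}. -/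
/-!
Write `M = Σ₀⁻¹ + nΣ_l⁻¹ = Cᴴ C` and `N = nΣ_l⁻¹`, so that `A = M⁻¹ N`. Then `A` is similar to
the Hermitian matrix `S = C⁻ᴴ N C⁻¹`, and `0 < S < 1` in the Loewner order because
`1 - S = C⁻ᴴ Σ₀⁻¹ C⁻¹`. Diagonalising `S` gives `A = Q D Q⁻¹` with `D` diagonal with entries
`dᵢ ∈ (0, 1)`, which is the spectral claim. In the coordinates `Z = Q⁻¹ X Q⁻ᵀ` the map
`X ↦ A X Aᵀ - X` multiplies the entry `Zᵢⱼ` by `dᵢ dⱼ - 1 ≠ 0`, so it is injective, hence bijective.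
-/

open Matrix

namespace Matrix

variable {ι : Type*} [Fintype ι] [DecidableEq ι]

section Field

variable {K : Type*} [Field K]

def lyapunovMap (A : Matrix ι ι K) : Matrix ι ι K →ₗ[K] Matrix ι ι K :=
  LinearMap.mulLeft K A ∘ₗ LinearMap.mulRight K Aᵀ - LinearMap.id

theorem lyapunovMap_apply (A X : Matrix ι ι K) : lyapunovMap A X = A * X * Aᵀ - X := by
  simp [lyapunovMap, Matrix.mul_assoc]

theorem existsUnique_lyapunov_of_injective {A : Matrix ι ι K}
    (hA : Function.Injective (lyapunovMap A)) (B : Matrix ι ι K) :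
    ∃! X : Matrix ι ι K, A * X * Aᵀ - X + B = 0 := by
  simp only [← lyapunovMap_apply, add_eq_zero_iff_eq_neg]
  obtain ⟨X, hX⟩ := LinearMap.injective_iff_surjective.mp hA (-B)
  exact ⟨X, hX, fun Y hY => hA (hY.trans hX.symm)⟩

theorem eq_zero_of_diagonal_mul_mul_diagonal_eq {d : ι → K} (hd : ∀ i j, d i * d j ≠ 1)
    {Z : Matrix ι ι K} (hZ : diagonal d * Z * diagonal d = Z) : Z = 0 := by
  ext i j
  have hij : d i * Z i j * d j = Z i j := by
    simpa only [mul_diagonal, diagonal_mul] using congrFun (congrFun hZ i) j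
  have : (d i * d j - 1) * Z i j = 0 := by linear_combination hij
  simpa [sub_ne_zero.mpr (hd i j)] using this

theorem injective_lyapunovMap_conj_diagonal {Q : Matrix ι ι K} (hQ : IsUnit Q) {d : ι → K}
    (hd : ∀ i j, d i * d j ≠ 1) :
    Function.Injective (lyapunovMap (Q * diagonal d * Q⁻¹)) := by
  have hQ' : IsUnit Q.det := (isUnit_iff_isUnit_det Q).mp hQ
  rw [← LinearMap.ker_eq_bot, LinearMap.ker_eq_bot']
  intro X hX
  rw [lyapunovMap_apply, sub_eq_zero] at hX
  set A := Q * diagonal d * Q⁻¹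
  have hQA : Q⁻¹ * A = diagonal d * Q⁻¹ := by
    simp only [A, ← Matrix.mul_assoc, nonsing_inv_mul _ hQ', Matrix.one_mul]
  have hZ : diagonal d * (Q⁻¹ * X * Q⁻¹ᵀ) * diagonal d = Q⁻¹ * X * Q⁻¹ᵀ := calc
    _ = (diagonal d * Q⁻¹) * X * (diagonal d * Q⁻¹)ᵀ := by
      simp only [transpose_mul, diagonal_transpose, Matrix.mul_assoc]
    _ = Q⁻¹ * (A * X * Aᵀ) * Q⁻¹ᵀ := by
      simp only [← hQA, transpose_mul, Matrix.mul_assoc]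
    _ = Q⁻¹ * X * Q⁻¹ᵀ := by rw [hX]
  have hX0 := eq_zero_of_diagonal_mul_mul_diagonal_eq hd hZ
  calc X = (Q * Q⁻¹) * X * (Q * Q⁻¹)ᵀ := by
        rw [mul_nonsing_inv _ hQ', transpose_one, Matrix.one_mul, Matrix.mul_one]
    _ = Q * (Q⁻¹ * X * Q⁻¹ᵀ) * Qᵀ := by simp only [transpose_mul, Matrix.mul_assoc]
    _ = 0 := by rw [hX0, Matrix.mul_zero, Matrix.zero_mul]

theorem spectrum_map_conj_diagonal {L : Type*} [Field L] (f : K →+* L) {Q : Matrix ι ι K}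
    (hQ : IsUnit Q) (d : ι → K) :
    spectrum L ((Q * diagonal d * Q⁻¹).map f) = Set.range (f ∘ d) := by
  lift Q to (Matrix ι ι K)ˣ using hQ
  let Q' := Units.map (RingHom.mapMatrix f).toMonoidHom Q
  have : ((Q : Matrix ι ι K) * diagonal d * (Q : Matrix ι ι K)⁻¹).map f =
      (Q' : Matrix ι ι L) * diagonal (f ∘ d) * ((Q'⁻¹ : (Matrix ι ι L)ˣ) : Matrix ι ι L) := by
    rw [← coe_units_inv]
    simp [Q', Matrix.map_mul, diagonal_map, Function.comp_def]
  rw [this, spectrum.units_conjugate, spectrum_diagonal]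

end Field

variable {𝕜 : Type*} [RCLike 𝕜]

open scoped ComplexOrder MatrixOrder

theorem IsHermitian.eigenvalues_lt_one {S : Matrix ι ι 𝕜} (hS : S.IsHermitian)
    (h : (1 - S).PosDef) (i : ι) : hS.eigenvalues i < 1 := by
  have hmem : 1 - hS.eigenvalues i ∈ spectrum ℝ (1 - S) := by
    rw [← map_one (algebraMap ℝ (Matrix ι ι 𝕜)), ← spectrum.singleton_sub_eq]
    exact Set.sub_mem_sub rfl (hS.eigenvalues_mem_spectrum_real i)
  linarith [h.isStrictlyPositive.spectrum_pos hmem]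

theorem PosDef.exists_inv_mul_eq_conj_diagonal {M N : Matrix ι ι 𝕜} (hN : N.PosDef)
    (hMN : (M - N).PosDef) :
    ∃ Q : Matrix ι ι 𝕜, IsUnit Q ∧ ∃ d : ι → ℝ, (∀ i, d i ∈ Set.Ioo 0 1) ∧
      M⁻¹ * N = Q * diagonal (RCLike.ofReal ∘ d) * Q⁻¹ := by
  have hM : M.PosDef := by simpa using hN.add hMN
  obtain ⟨C, hC, rfl⟩ :=
    CStarAlgebra.isStrictlyPositive_iff_eq_star_mul_self.mp hM.isStrictlyPositive
  have hCi : IsUnit C⁻¹ := isUnit_nonsing_inv_iff.mpr hC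
  have hCCi : C * C⁻¹ = 1 := mul_nonsing_inv C ((isUnit_iff_isUnit_det C).mp hC)
  have hCiC : C⁻¹ * C = 1 := nonsing_inv_mul C ((isUnit_iff_isUnit_det C).mp hC)
  have hstar : star C⁻¹ * star C = 1 := by rw [← star_mul, hCCi, star_one]
  set S := star C⁻¹ * N * C⁻¹
  have hS : S.PosDef := (IsUnit.posDef_star_left_conjugate_iff hCi).mpr hN
  have h1S : (1 - S).PosDef := by
    have h1 : 1 - S = star C⁻¹ * (star C * C - N) * C⁻¹ := by
      rw [Matrix.mul_sub, Matrix.sub_mul, ← Matrix.mul_assoc, hstar, Matrix.one_mul, hCCi]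
    exact h1 ▸ (IsUnit.posDef_star_left_conjugate_iff hCi).mpr hMN
  set U : Matrix ι ι 𝕜 := (hS.1.eigenvectorUnitary : Matrix ι ι 𝕜)
  have hUU : star U * U = 1 := Unitary.coe_star_mul_self _
  have hMinv : (star C * C)⁻¹ = C⁻¹ * star C⁻¹ := inv_eq_left_inv (by
    rw [Matrix.mul_assoc, ← Matrix.mul_assoc (star C⁻¹), hstar, Matrix.one_mul, hCiC])
  have hQinv : (C⁻¹ * U)⁻¹ = star U * C := inv_eq_left_inv (by
    rw [Matrix.mul_assoc, ← Matrix.mul_assoc C, hCCi, Matrix.one_mul, hUU])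
  refine ⟨C⁻¹ * U, hCi.mul Unitary.isUnit_coe, hS.1.eigenvalues,
    fun i => ⟨hS.eigenvalues_pos i, hS.1.eigenvalues_lt_one h1S i⟩, ?_⟩
  calc (star C * C)⁻¹ * N = C⁻¹ * S * C := by
        rw [hMinv]; simp only [S, Matrix.mul_assoc, hCiC, Matrix.mul_one]
    _ = C⁻¹ * U * diagonal (RCLike.ofReal ∘ hS.1.eigenvalues) * (C⁻¹ * U)⁻¹ := by
        rw [hQinv]
        conv_lhs => rw [hS.1.spectral_theorem, Unitary.conjStarAlgAut_apply]
        simp only [Matrix.mul_assoc]; rfl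

end Matrix

/-- Every eigenvalue of `A = n(Σ₀⁻¹ + nΣ_l⁻¹)⁻¹Σ_l⁻¹` is real and lies in
`(0, 1)`; consequently, for any `B` the discrete Lyapunov equation `AXAᵀ − X + B = 0`
has a unique solution. -/
theorem gibbs_mean_map_spectrum_and_lyapunov
    {d : ℕ} (S0 Sl : Matrix (Fin d) (Fin d) ℝ)
    (hS0 : S0.PosDef) (hSl : Sl.PosDef)
    (n : ℕ) (hn : 1 ≤ n)
    (A : Matrix (Fin d) (Fin d) ℝ)
    (hA : A = (n : ℝ) • ((S0⁻¹ + (n : ℝ) • Sl⁻¹)⁻¹ * Sl⁻¹)) :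
    (∀ μ : ℂ, μ ∈ spectrum ℂ (A.map (fun x : ℝ => (x : ℂ))) →
        μ.im = 0 ∧ 0 < μ.re ∧ μ.re < 1) ∧
    ∀ B : Matrix (Fin d) (Fin d) ℝ,
      ∃! X : Matrix (Fin d) (Fin d) ℝ, A * X * Aᵀ - X + B = 0 := by
  have hN : ((n : ℝ) • Sl⁻¹).PosDef := hSl.inv.smul (by exact_mod_cast hn)
  obtain ⟨Q, hQ, e, he, hAQ⟩ :=
    hN.exists_inv_mul_eq_conj_diagonal (M := S0⁻¹ + (n : ℝ) • Sl⁻¹) (by simpa using hS0.inv)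
  rw [RCLike.ofReal_real_eq_id, Function.id_comp, Matrix.mul_smul, ← hA] at hAQ
  subst hAQ
  have he_mul : ∀ i j, e i * e j ≠ 1 := fun i j =>
    (mul_lt_one_of_nonneg_of_lt_one_left (he i).1.le (he i).2 (he j).2.le).ne
  refine ⟨fun μ hμ => ?_,
    existsUnique_lyapunov_of_injective (injective_lyapunovMap_conj_diagonal hQ he_mul)⟩
  obtain ⟨i, rfl⟩ := (spectrum_map_conj_diagonal Complex.ofRealHom hQ e).subset hμ
  exact ⟨Complex.ofReal_im _, he i⟩
end
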